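/- arXiv:2512.10372 — 2 statements merged into one kernel-verified Lean document; each statement's English description precedes it below -/
import Mathlib

section
/- Let 0 ≤ q ≤ q' ≤ 1, A_n ≥ 0, A_c ≥ 0, 0 ≤ q_caught ≤ 1, β > 0, and N ≥ 1. If β·(q' − q)·A_n ≤ q_caught·A_c, then there exists a per-node bribe level b ≥ 0 satisfying simultaneously N·b ≥ (q' − q)·A_n and q_caught·(A_c/N) ≥ β·b; consequently, for any such b, the seller's honest payoff q·A_n is at least its malicious payoff (1−β)·q·A_n + β·(q'·A_n − N·b), and each compute node's honest payoff A_c/N is at least its colluding payoff (A_c/N)·(1 − q_caught) + β·b, so honesty is a (weakly) dominant strategy for every player. -/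
/-- If `β * (q' - q) * A_n ≤ q_caught * A_c`, then there exists a per-node
bribe level `b ≥ 0` satisfying both `N * b ≥ (q' - q) * A_n` and
`q_caught * (A_c / N) ≥ β * b`; moreover, for any such `b`, both the seller
and each compute node weakly prefer honesty. -/
theorem honesty_dominant_for_all_players
    (q q' A_n A_c q_caught β : ℝ) (N : ℕ)
    (hq0 : 0 ≤ q) (hqq' : q ≤ q') (hq'1 : q' ≤ 1)
    (hAn : 0 ≤ A_n) (hAc : 0 ≤ A_c)
    (hqc0 : 0 ≤ q_caught) (hqc1 : q_caught ≤ 1)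
    (hβ : 0 < β) (hN : 1 ≤ N)
    (hcond : β * (q' - q) * A_n ≤ q_caught * A_c) :
    (∃ b : ℝ, 0 ≤ b ∧ (N : ℝ) * b ≥ (q' - q) * A_n ∧
        q_caught * (A_c / (N : ℝ)) ≥ β * b) ∧
    (∀ b : ℝ, 0 ≤ b → (N : ℝ) * b ≥ (q' - q) * A_n →
        q_caught * (A_c / (N : ℝ)) ≥ β * b →
        q * A_n ≥ (1 - β) * q * A_n + β * (q' * A_n - (N : ℝ) * b) ∧
        A_c / (N : ℝ) ≥ (A_c / (N : ℝ)) * (1 - q_caught) + β * b) := by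
  have hNpos : (0:ℝ) < (N:ℝ) := by exact_mod_cast Nat.lt_of_lt_of_le Nat.zero_lt_one hN
  constructor
  · refine ⟨(q' - q) * A_n / N, ?_, ?_, ?_⟩
    · exact div_nonneg (mul_nonneg (sub_nonneg.mpr hqq') hAn) hNpos.le
    · rw [ge_iff_le, mul_div_cancel₀ _ hNpos.ne']
    · rw [ge_iff_le, show β * ((q' - q) * A_n / ↑N) = β * ((q' - q) * A_n) / ↑N by ring,
        show q_caught * (A_c / ↑N) = q_caught * A_c / ↑N by ring]
      apply div_le_div_of_nonneg_right ?_ hNpos.le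
      linarith [hcond, mul_assoc β (q' - q) A_n]
  · intro b hb h1 h2
    constructor
    · nlinarith
    · have : q_caught * (A_c / N) = (A_c / N) * q_caught := mul_comm _ _
      nlinarith
end

section
/- Let A_n ≥ 0, A_c ≥ 0, 0 ≤ q ≤ q', 0 ≤ q_caught, β > 0, and N > 0. Then there exists b with (q' − q)·A_n / N ≤ b ≤ q_caught·A_c / (β·N) if and only if β·(q' − q)·A_n ≤ q_caught·A_c. -/
/-- A per-node bribe level compatible with both the seller's lower bound
`(q' - q) * A_n / N ≤ b` and the compute node's upper bound
`b ≤ q_caught * A_c / (β * N)` exists if and only if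
`β * (q' - q) * A_n ≤ q_caught * A_c`. -/
theorem bribe_exists_iff
    (A_n A_c q q' q_caught β N : ℝ)
    (hAn : 0 ≤ A_n) (hAc : 0 ≤ A_c)
    (hq0 : 0 ≤ q) (hqq' : q ≤ q') (hqc : 0 ≤ q_caught)
    (hβ : 0 < β) (hN : 0 < N) :
    (∃ b : ℝ, (q' - q) * A_n / N ≤ b ∧ b ≤ q_caught * A_c / (β * N)) ↔
      β * (q' - q) * A_n ≤ q_caught * A_c := by
  constructor
  · rintro ⟨b, h1, h2⟩
    have h := h1.trans h2
    rw [div_le_div_iff₀ hN (by positivity)] at h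
    nlinarith
  · intro h
    refine ⟨(q' - q) * A_n / N, le_refl _, ?_⟩
    rw [div_le_div_iff₀ hN (by positivity)]
    nlinarith
end
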